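/- arXiv:1304.0825 — 8 statements merged into one kernel-verified Lean document; each statement's English description precedes it below -/
import Mathlib

section
/- Necessity direction of the criterion for continuous invariants (Theorem 2): Let f be a polynomial vector field on ℝⁿ whose solutions exist and are unique on [0, ∞), and let p, h ∈ ℝ[x1, …, xn] be polynomials. If the set P = {x ∈ ℝⁿ : p(x) ≥ 0} is a continuous invariant of (D, f) with D = {x ∈ ℝⁿ : h(x) > 0}, then for every x ∈ ℝⁿ with p(x) = 0 and h(x) > 0, either L^k_f p(x) = 0 for all k ≥ 1, or the least k ≥ 1 with L^k_f p(x) ≠ 0 satisfies L^k_f p(x) > 0. -/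
/-! If the first non-vanishing Lie derivative `L^k_f p` were negative at `x₀`, follow the solution
`x` from `x₀`. The functions `t ↦ L^j_f p (x t)` form a chain, each the derivative of the previous
one, that vanish at `t = 0` for `j < k`; by downward induction from `j = k` each is negative on a
right neighbourhood of `0`. For `j = 0` this says that `p` becomes negative immediately, while `h`
stays positive by continuity, contradicting invariance. -/

open MvPolynomial Set

/-- Lie derivatives of a polynomial `p` along the polynomial vector field `f`. -/
noncomputable def lieDeriv {n : ℕ} (f : Fin n → MvPolynomial (Fin n) ℝ)
    (p : MvPolynomial (Fin n) ℝ) : ℕ → MvPolynomial (Fin n) ℝ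
  | 0 => p
  | k + 1 => ∑ i, (pderiv i (lieDeriv f p k)) * f i

/-- Evaluation of a polynomial vector field at a point of ℝⁿ. -/
noncomputable def evalVF {n : ℕ} (f : Fin n → MvPolynomial (Fin n) ℝ)
    (x : Fin n → ℝ) : Fin n → ℝ := fun i => eval x (f i)

/-- `x : ℝ → ℝⁿ` is a solution of `ẋ = F(x)` on `[0, ∞)`. -/
def IsSolutionOn {n : ℕ} (F : (Fin n → ℝ) → (Fin n → ℝ)) (x : ℝ → (Fin n → ℝ)) : Prop :=
  ∀ t ∈ Ici (0:ℝ), HasDerivWithinAt x (F (x t)) (Ici 0) t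

/-- Solutions of `ẋ = F(x)` exist and are unique on `[0, ∞)` for every initial condition. -/
def CompleteFlow {n : ℕ} (F : (Fin n → ℝ) → (Fin n → ℝ)) : Prop :=
  (∀ x0 : Fin n → ℝ, ∃ x : ℝ → (Fin n → ℝ), x 0 = x0 ∧ IsSolutionOn F x) ∧
  (∀ x y : ℝ → (Fin n → ℝ), IsSolutionOn F x → IsSolutionOn F y → x 0 = y 0 →
    ∀ t ∈ Ici (0:ℝ), x t = y t)

/-- `P` is a continuous invariant of `(D, F)`. -/
def IsCI {n : ℕ} (D P : Set (Fin n → ℝ)) (F : (Fin n → ℝ) → (Fin n → ℝ)) : Prop :=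
  ∀ x : ℝ → (Fin n → ℝ), IsSolutionOn F x → x 0 ∈ P ∩ D →
    ∀ T ≥ (0:ℝ), (∀ t ∈ Icc (0:ℝ) T, x t ∈ D) → ∀ t ∈ Icc (0:ℝ) T, x t ∈ P

open Filter Topology

theorem MvPolynomial.hasDerivWithinAt_eval {σ : Type*} [Fintype σ] [DecidableEq σ]
    (q : MvPolynomial σ ℝ) {x : ℝ → σ → ℝ} {x' : σ → ℝ} {s : Set ℝ} {t : ℝ}
    (hx : HasDerivWithinAt x x' s t) :
    HasDerivWithinAt (fun u => eval (x u) q) (∑ i, eval (x t) (pderiv i q) * x' i) s t := by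
  induction q using MvPolynomial.induction_on with
  | C a => simpa using hasDerivWithinAt_const t s a
  | add q r hq hr => simpa [add_mul, Finset.sum_add_distrib] using hq.fun_add hr
  | mul_X q i hq =>
    have hprod : (fun u => eval (x u) (q * X i)) = fun u => eval (x u) q * x u i := by
      ext u; simp
    rw [hprod]
    refine (hq.fun_mul (hasDerivWithinAt_pi.mp hx i)).congr_deriv ?_
    simp only [Derivation.leibniz, pderiv_X, smul_eq_mul, map_add, map_mul, eval_X, add_mul,
      Finset.sum_add_distrib, Pi.single_apply, mul_ite, mul_one, mul_zero, apply_ite (eval (x t)),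
      map_zero, ite_mul, zero_mul, Finset.sum_ite_eq, Finset.mem_univ, if_true, Finset.sum_mul]
    rw [add_comm]
    exact congrArg₂ _ rfl (Finset.sum_congr rfl fun _ _ => by ring)

theorem IsSolutionOn.hasDerivWithinAt_eval_lieDeriv {n : ℕ}
    {f : Fin n → MvPolynomial (Fin n) ℝ} {x : ℝ → Fin n → ℝ} (hx : IsSolutionOn (evalVF f) x)
    (p : MvPolynomial (Fin n) ℝ) (k : ℕ) {t : ℝ} (ht : 0 ≤ t) :
    HasDerivWithinAt (fun s => eval (x s) (lieDeriv f p k))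
      (eval (x t) (lieDeriv f p (k + 1))) (Ici 0) t := by
  simpa [lieDeriv, evalVF] using (lieDeriv f p k).hasDerivWithinAt_eval (hx t ht)

theorem eventually_nhdsGT_neg_of_hasDerivWithinAt {g g' : ℝ → ℝ} {a : ℝ}
    (hg : ∀ t ≥ a, HasDerivWithinAt g (g' t) (Ici a) t) (ha : g a ≤ 0)
    (hg' : ∀ᶠ t in 𝓝[>] a, g' t < 0) : ∀ᶠ t in 𝓝[>] a, g t < 0 := by
  obtain ⟨b, hab, hb⟩ := mem_nhdsGT_iff_exists_Ioo_subset.mp hg'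
  have hanti : StrictAntiOn g (Ico a b) := by
    refine strictAntiOn_of_deriv_neg (convex_Ico a b)
      (fun t ht => (hg t ht.1).continuousWithinAt.mono Ico_subset_Ici_self) fun t ht => ?_
    rw [interior_Ico] at ht
    rw [((hg t ht.1.le).hasDerivAt (Ici_mem_nhds ht.1)).deriv]
    exact hb ht
  filter_upwards [Ioo_mem_nhdsGT hab] with t ht
  exact (hanti ⟨le_rfl, hab⟩ ⟨ht.1.le, ht.2⟩ ht.1).trans_le ha

theorem eventually_nhdsGT_neg_of_iterate_hasDerivWithinAt {g : ℕ → ℝ → ℝ} {a : ℝ}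
    (hg : ∀ j, ∀ t ≥ a, HasDerivWithinAt (g j) (g (j + 1) t) (Ici a) t) {k : ℕ}
    (hbelow : ∀ j < k, g j a ≤ 0) (hk : g k a < 0) : ∀ᶠ t in 𝓝[>] a, g 0 t < 0 := by
  induction k generalizing g with
  | zero =>
    exact ((hg 0 a le_rfl).continuousWithinAt.mono Ioi_subset_Ici_self).eventually_lt_const hk
  | succ k ih =>
    exact eventually_nhdsGT_neg_of_hasDerivWithinAt (hg 0) (hbelow 0 k.succ_pos)
      (ih (g := fun j => g (j + 1)) (fun j => hg (j + 1)) (fun j hj => hbelow (j + 1) (by omega)) hk)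

theorem IsCI.eventually_mem {n : ℕ} {D P : Set (Fin n → ℝ)} {F : (Fin n → ℝ) → (Fin n → ℝ)}
    (hCI : IsCI D P F) {x : ℝ → Fin n → ℝ} (hx : IsSolutionOn F x) (hP : x 0 ∈ P)
    (hD : ∀ᶠ t in 𝓝[≥] 0, x t ∈ D) : ∀ᶠ t in 𝓝[≥] 0, x t ∈ P := by
  obtain ⟨b, hb, hbD⟩ := mem_nhdsGE_iff_exists_Ico_subset.mp hD
  filter_upwards [Ico_mem_nhdsGE hb] with t ht
  exact hCI x hx ⟨hP, hbD ⟨le_rfl, hb⟩⟩ t ht.1 (fun s hs => hbD ⟨hs.1, hs.2.trans_lt ht.2⟩) t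
    ⟨ht.1, le_rfl⟩

/-- **Necessity direction of Theorem 2.** If `{p ≥ 0}` is a continuous invariant
of `({h > 0}, f)`, then at every point of the boundary `p = 0` inside the domain
`h > 0`, either all higher-order Lie derivatives of `p` along `f` vanish, or the
first non-vanishing one is positive. -/
theorem ci_criterion_necessity {n : ℕ} (f : Fin n → MvPolynomial (Fin n) ℝ)
    (p h : MvPolynomial (Fin n) ℝ)
    (hflow : CompleteFlow (evalVF f))
    (hCI : IsCI {x | 0 < eval x h} {x | 0 ≤ eval x p} (evalVF f)) :
    ∀ x : Fin n → ℝ, eval x p = 0 → 0 < eval x h →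
      (∀ k : ℕ, 1 ≤ k → eval x (lieDeriv f p k) = 0) ∨
      (∃ k : ℕ, 1 ≤ k ∧ (∀ j : ℕ, 1 ≤ j → j < k → eval x (lieDeriv f p j) = 0) ∧
        eval x (lieDeriv f p k) ≠ 0 ∧ 0 < eval x (lieDeriv f p k)) := by
  intro x₀ hp₀ hh₀
  by_cases hall : ∀ k : ℕ, 1 ≤ k → eval x₀ (lieDeriv f p k) = 0
  · exact .inl hall
  push Not at hall
  classical
  obtain ⟨hk₁, hk⟩ := Nat.find_spec hall
  have hbelow : ∀ j, 1 ≤ j → j < Nat.find hall → eval x₀ (lieDeriv f p j) = 0 :=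
    fun j hj₁ hjk => by_contra fun hj => Nat.find_min hall hjk ⟨hj₁, hj⟩
  refine .inr ⟨Nat.find hall, hk₁, hbelow, hk, ?_⟩
  by_contra! hk_nonpos
  obtain ⟨x, rfl, hx⟩ := hflow.1 x₀
  have hexit : ∀ᶠ t in 𝓝[>] 0, eval (x t) p < 0 := by
    refine eventually_nhdsGT_neg_of_iterate_hasDerivWithinAt
      (g := fun j t => eval (x t) (lieDeriv f p j))
      (fun j t ht => hx.hasDerivWithinAt_eval_lieDeriv p j ht) (fun j hj => ?_)
      (hk_nonpos.lt_of_ne hk)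
    rcases j with _ | j
    · exact hp₀.le
    · exact (hbelow (j + 1) j.succ_pos hj).le
  have hdomain : ∀ᶠ t in 𝓝[≥] 0, 0 < eval (x t) h :=
    ((continuous_eval h).continuousAt.comp_continuousWithinAt
      (hx 0 self_mem_Ici).continuousWithinAt).eventually_const_lt hh₀
  have hstay : ∀ᶠ t in 𝓝[≥] 0, 0 ≤ eval (x t) p := hCI.eventually_mem hx hp₀.ge hdomain
  obtain ⟨t, hneg, hnonneg⟩ :=
    (hexit.and (hstay.filter_mono (nhdsWithin_mono _ Ioi_subset_Ici_self))).exists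
  exact hneg.not_ge hnonneg
end

section
/- Local boundary characterization of continuous invariants: Let f be a polynomial vector field on ℝⁿ whose solutions exist and are unique on [0, ∞), and let p, h ∈ ℝ[x1, …, xn] be polynomials. Then P = {x ∈ ℝⁿ : p(x) ≥ 0} is a continuous invariant of (D, f) with D = {x ∈ ℝⁿ : h(x) > 0} if and only if for every x0 ∈ ℝⁿ with p(x0) = 0 and h(x0) > 0, the solution x(t) of ẋ = f(x) with x(0) = x0 satisfies: there exists ε > 0 such that p(x(t)) ≥ 0 for all t ∈ [0, ε]. -/
open MvPolynomial Set

open Filter Topology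

/-!
Along a solution `x`, the times `t ∈ [0, T]` with `p (x t) ≥ 0` form a closed set containing `0`.
It contains a right neighbourhood of each of its points below `T`: of points with `p (x t) > 0` by
continuity, and of boundary points by the hypothesis applied to the time-shifted solution, which
is again a solution. A closed subset of `[0, T]` with this property is all of `[0, T]`.
Conversely, a solution starting in the open set `{h > 0}` stays there for a short time, on which
the invariant applies.
-/

section ContinuousInvariant

variable {n : ℕ} {F : (Fin n → ℝ) → (Fin n → ℝ)} {x : ℝ → (Fin n → ℝ)} {D P : Set (Fin n → ℝ)}

lemma IsSolutionOn.continuousOn (hx : IsSolutionOn F x) : ContinuousOn x (Ici 0) :=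
  fun t ht => (hx t ht).continuousWithinAt

lemma IsSolutionOn.comp_const_add (hx : IsSolutionOn F x) {c : ℝ} (hc : 0 ≤ c) :
    IsSolutionOn F (fun s => x (c + s)) := by
  intro s hs
  have hshift : HasDerivWithinAt (fun s : ℝ => c + s) 1 (Ici 0) s :=
    ((hasDerivAt_id s).const_add c).hasDerivWithinAt
  have hmaps : MapsTo (fun s : ℝ => c + s) (Ici 0) (Ici 0) := fun u hu =>
    add_nonneg hc hu
  have hcomp := (hx (c + s) (hmaps hs)).scomp s hshift hmaps
  rwa [one_smul] at hcomp

lemma IsCI.exists_forall_Icc_mem (hCI : IsCI D P F) (hD : IsOpen D) (hx : IsSolutionOn F x)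
    (hx0 : x 0 ∈ P ∩ D) : ∃ ε > (0 : ℝ), ∀ t ∈ Icc 0 ε, x t ∈ P := by
  have hstay : ∀ᶠ t in 𝓝[≥] 0, x t ∈ D :=
    (hx.continuousOn 0 self_mem_Ici).eventually_mem (hD.mem_nhds hx0.2)
  obtain ⟨ε, hε, hsub⟩ := mem_nhdsGE_iff_exists_Icc_subset.1 hstay
  exact ⟨ε, hε, hCI x hx hx0 ε hε.le hsub⟩

lemma IsSolutionOn.eventually_mem_of_frontier (hP : IsClosed P)
    (hfront : ∀ y, IsSolutionOn F y → y 0 ∈ frontier P → y 0 ∈ D →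
      ∃ ε > (0 : ℝ), ∀ t ∈ Icc 0 ε, y t ∈ P)
    (hx : IsSolutionOn F x) {t : ℝ} (ht : 0 ≤ t) (hxt : x t ∈ P ∩ D) :
    ∀ᶠ s in 𝓝[>] t, x s ∈ P := by
  by_cases hint : x t ∈ interior P
  · exact nhdsWithin_mono _ (Ioi_subset_Ici ht) <|
      ((hx.continuousOn t ht).eventually_mem (isOpen_interior.mem_nhds hint)).mono
        fun _ hs => interior_subset hs
  · have hbdry : x t ∈ frontier P := by rw [hP.frontier_eq]; exact ⟨hxt.1, hint⟩
    obtain ⟨ε, hε, hεP⟩ := hfront _ (hx.comp_const_add ht) (by simpa using hbdry)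
      (by simpa using hxt.2)
    refine mem_nhdsGT_iff_exists_Ioc_subset.2 ⟨t + ε, by simpa using hε, fun s hs => ?_⟩
    simpa using hεP (s - t) ⟨by linarith [hs.1], by linarith [hs.2]⟩

lemma isCI_of_frontier (hP : IsClosed P)
    (hfront : ∀ y, IsSolutionOn F y → y 0 ∈ frontier P → y 0 ∈ D →
      ∃ ε > (0 : ℝ), ∀ t ∈ Icc 0 ε, y t ∈ P) :
    IsCI D P F := by
  intro x hx hx0 T _ hD
  have hclosed : IsClosed ({t | x t ∈ P} ∩ Icc 0 T) := by
    rw [inter_comm]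
    exact (hx.continuousOn.mono Icc_subset_Ici_self).preimage_isClosed_of_isClosed isClosed_Icc hP
  exact hclosed.Icc_subset_of_forall_mem_nhdsWithin hx0.1 fun t ⟨hxt, ht⟩ =>
    hx.eventually_mem_of_frontier hP hfront ht.1 ⟨hxt, hD t (Ico_subset_Icc_self ht)⟩

end ContinuousInvariant

theorem ci_boundary_characterization_general {n : ℕ} (f : Fin n → MvPolynomial (Fin n) ℝ)
    (p h : MvPolynomial (Fin n) ℝ) :
    IsCI {x | 0 < eval x h} {x | 0 ≤ eval x p} (evalVF f) ↔
    (∀ x : ℝ → (Fin n → ℝ), IsSolutionOn (evalVF f) x →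
      eval (x 0) p = 0 → 0 < eval (x 0) h →
      ∃ ε > (0:ℝ), ∀ t ∈ Icc (0:ℝ) ε, 0 ≤ eval (x t) p) := by
  constructor
  · intro hCI x hx hp0 hh0
    exact hCI.exists_forall_Icc_mem (isOpen_lt continuous_const (continuous_eval h)) hx
      ⟨hp0.ge, hh0⟩
  · intro hloc
    refine isCI_of_frontier (isClosed_le continuous_const (continuous_eval p)) fun y hy hy0 hyD =>
      hloc y hy ?_ hyD
    exact (frontier_le_subset_eq continuous_const (continuous_eval p) hy0).symm

/-- **Local boundary characterization of continuous invariants.** `{p ≥ 0}` is a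
continuous invariant of `({h > 0}, f)` if and only if every solution starting at
a point of the boundary `p = 0` inside the domain `h > 0` satisfies `p ≥ 0` on
some small interval `[0, ε]`. -/
theorem ci_boundary_characterization {n : ℕ} (f : Fin n → MvPolynomial (Fin n) ℝ)
    (p h : MvPolynomial (Fin n) ℝ)
    (hflow : CompleteFlow (evalVF f)) :
    IsCI {x | 0 < eval x h} {x | 0 ≤ eval x p} (evalVF f) ↔
    (∀ x : ℝ → (Fin n → ℝ), IsSolutionOn (evalVF f) x →
      eval (x 0) p = 0 → 0 < eval (x 0) h →
      ∃ ε > (0:ℝ), ∀ t ∈ Icc (0:ℝ) ε, 0 ≤ eval (x t) p) :=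
  ci_boundary_characterization_general f p h
end

section
/- Proposition 2: Let A ∈ ℝ^{n×n}, b ∈ ℝ^{n×1} a column vector, c ∈ ℝ^{1×n} a row vector, a ∈ ℝ, Q ∈ ℝ^{r×n}, and ρ ∈ ℝ^{r×1}. Set f(x) = A x + b and D = {x ∈ ℝⁿ : c x < a}. Suppose there exist an essentially non-negative matrix H ∈ ℝ^{r×r} and non-negative column vectors η, ξ, λ ∈ ℝ^{r×1} (η ≥ 0, ξ ≥ 0, λ ≥ 0 entrywise) such that: (1) H Q + ξ c − diag(λ) Q A = 0; (2) H ρ + η + ξ a + diag(λ) Q b = 0; and (3) ξ + η > 0 entrywise. Then the polyhedron P = {x ∈ ℝⁿ : Q x ≤ ρ} is a continuous invariant of (D, f). -/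
open MvPolynomial Set

/-!
Along a solution, `g = Q x - ρ` satisfies `diag(λ) ġ = H g + (c x - a) ξ - η` by (1) and (2).
While `x` stays in `D`, a coordinate `g_j` that reaches `0` while `g ≤ 0` has `λ_j ġ_j < 0`,
because `H` is essentially non-negative and `ξ_j + η_j > 0`; so it strictly decreases there.
Real induction on `[0, T]` then keeps `g ≤ 0`.
-/

open Filter Topology Matrix

theorem HasDerivWithinAt.eventually_lt_of_neg_right {f : ℝ → ℝ} {f' x : ℝ}
    (hf : HasDerivWithinAt f f' (Ioi x) x) (hf' : f' < 0) : ∀ᶠ y in 𝓝[>] x, f y < f x := by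
  have hslope := (hasDerivWithinAt_iff_tendsto_slope' self_notMem_Ioi).mp hf
  filter_upwards [hslope (Iio_mem_nhds hf'), self_mem_nhdsWithin] with y hy hxy
  exact (slope_neg_iff_of_le (le_of_lt hxy)).mp hy

theorem HasDerivWithinAt.eventually_nonpos_right {f : ℝ → ℝ} {f' x : ℝ}
    (hf : HasDerivWithinAt f f' (Ioi x) x) (hx : f x ≤ 0) (hzero : f x = 0 → f' < 0) :
    ∀ᶠ y in 𝓝[>] x, f y ≤ 0 := by
  rcases hx.lt_or_eq with hneg | hzero'
  · filter_upwards [hf.continuousWithinAt (Iio_mem_nhds hneg)] with y hy using le_of_lt hy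
  · filter_upwards [hf.eventually_lt_of_neg_right (hzero hzero')] with y hy
    exact hzero' ▸ hy.le

theorem nonpos_on_Icc_of_boundary_deriv_neg {ι : Type*} [Finite ι] {g g' : ℝ → ι → ℝ}
    {a b : ℝ} (hcont : ContinuousOn g (Icc a b))
    (hderiv : ∀ t ∈ Ico a b, HasDerivWithinAt g (g' t) (Ioi t) t) (ha : g a ≤ 0)
    (hboundary : ∀ t ∈ Ico a b, g t ≤ 0 → ∀ i, g t i = 0 → g' t i < 0) :
    ∀ t ∈ Icc a b, g t ≤ 0 := by
  have hclosed : IsClosed ({t | g t ≤ 0} ∩ Icc a b) := by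
    rw [inter_comm]
    exact hcont.preimage_isClosed_of_isClosed isClosed_Icc isClosed_Iic
  refine hclosed.Icc_subset_of_forall_mem_nhdsWithin ha fun t ⟨hgt, ht⟩ => ?_
  have hcoord : ∀ i, ∀ᶠ s in 𝓝[>] t, g s i ≤ 0 := fun i =>
    (hasDerivWithinAt_pi.mp (hderiv t ht) i).eventually_nonpos_right (hgt i)
      (hboundary t ht hgt i)
  exact (eventually_all.mpr hcoord).mono fun s hs => hs

theorem Matrix.mulVec_apply_nonpos_of_offDiag_nonneg {ι : Type*} [Fintype ι]
    {H : Matrix ι ι ℝ} (hH : ∀ i j, i ≠ j → 0 ≤ H i j) {y : ι → ℝ} (hy : y ≤ 0) {i : ι}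
    (hi : y i = 0) : (H *ᵥ y) i ≤ 0 := by
  refine Finset.sum_nonpos fun j _ => ?_
  rcases eq_or_ne i j with rfl | hij
  · simp [hi]
  · exact mul_nonpos_of_nonneg_of_nonpos (hH i j hij) (hy j)

section AffineCertificate

variable {n r : ℕ} {A : Matrix (Fin n) (Fin n) ℝ} {b c : Fin n → ℝ} {a : ℝ}
  {Q : Matrix (Fin r) (Fin n) ℝ} {ρ : Fin r → ℝ} {H : Matrix (Fin r) (Fin r) ℝ}
  {η ξ lam : Fin r → ℝ}

theorem diagonal_mulVec_affine_eq
    (h1 : H * Q + vecMulVec ξ c - diagonal lam * Q * A = 0)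
    (h2 : H *ᵥ ρ + η + a • ξ + (diagonal lam * Q) *ᵥ b = 0) (v : Fin n → ℝ) :
    diagonal lam *ᵥ (Q *ᵥ (A *ᵥ v + b)) = H *ᵥ (Q *ᵥ v - ρ) + (c ⬝ᵥ v - a) • ξ - η := by
  have hA : diagonal lam * Q * A = H * Q + vecMulVec ξ c := (sub_eq_zero.mp h1).symm
  have hb : (diagonal lam * Q) *ᵥ b = -(H *ᵥ ρ + η + a • ξ) := eq_neg_of_add_eq_zero_right h2
  rw [mulVec_mulVec, mulVec_add, mulVec_mulVec, hA, hb, add_mulVec, vecMulVec_mulVec,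
    ← mulVec_mulVec, mulVec_sub, op_smul_eq_smul, sub_smul]
  abel

theorem mulVec_affine_apply_neg_of_boundary (hlam : ∀ i, 0 ≤ lam i)
    (hH : ∀ i j, i ≠ j → 0 ≤ H i j) (hη : ∀ i, 0 ≤ η i) (hξ : ∀ i, 0 ≤ ξ i)
    (h1 : H * Q + vecMulVec ξ c - diagonal lam * Q * A = 0)
    (h2 : H *ᵥ ρ + η + a • ξ + (diagonal lam * Q) *ᵥ b = 0)
    (h3 : ∀ i, 0 < ξ i + η i) {v : Fin n → ℝ} (hv : Q *ᵥ v - ρ ≤ 0) (hva : c ⬝ᵥ v < a)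
    {j : Fin r} (hj : (Q *ᵥ v - ρ) j = 0) : (Q *ᵥ (A *ᵥ v + b)) j < 0 := by
  have hid := congrFun (diagonal_mulVec_affine_eq h1 h2 v) j
  simp only [mulVec_diagonal, Pi.add_apply, Pi.sub_apply, Pi.smul_apply, smul_eq_mul] at hid
  have hHy := mulVec_apply_nonpos_of_offDiag_nonneg hH hv hj
  have hslack : (c ⬝ᵥ v - a) * ξ j - η j < 0 := by
    rcases (hξ j).eq_or_lt with hξ0 | hξpos
    · rw [← hξ0]
      linarith [h3 j]
    · nlinarith [mul_pos (sub_pos.mpr hva) hξpos, hη j]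
  exact neg_of_mul_neg_right (by linarith) (hlam j)

end AffineCertificate

theorem IsSolutionOn.hasDerivWithinAt_mulVec_sub {n r : ℕ} {F : (Fin n → ℝ) → Fin n → ℝ}
    {x : ℝ → Fin n → ℝ} (hx : IsSolutionOn F x) (Q : Matrix (Fin r) (Fin n) ℝ)
    (ρ : Fin r → ℝ) {t : ℝ} (ht : 0 ≤ t) :
    HasDerivWithinAt (fun s => Q *ᵥ x s - ρ) (Q *ᵥ F (x t)) (Ici 0) t :=
  ((mulVecLin Q).toContinuousLinearMap.hasFDerivAt.comp_hasDerivWithinAt t (hx t ht)).sub_const ρ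

/-- **Proposition 2.** A sufficient condition, in terms of an essentially
non-negative matrix `H` and non-negative vectors `η, ξ, λ`, for the polyhedron
`{x | Q x ≤ ρ}` to be a continuous invariant of the affine system
`ẋ = A x + b` with open half-space domain `{x | c x < a}`. -/
theorem polyhedral_ci_sufficient {n r : ℕ}
    (A : Matrix (Fin n) (Fin n) ℝ) (b : Fin n → ℝ)
    (c : Fin n → ℝ) (a : ℝ)
    (Q : Matrix (Fin r) (Fin n) ℝ) (ρ : Fin r → ℝ)
    (H : Matrix (Fin r) (Fin r) ℝ) (η ξ lam : Fin r → ℝ)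
    (hH : ∀ i j, i ≠ j → 0 ≤ H i j)
    (hη : ∀ i, 0 ≤ η i) (hξ : ∀ i, 0 ≤ ξ i) (hlam : ∀ i, 0 ≤ lam i)
    (h1 : H * Q + Matrix.vecMulVec ξ c - Matrix.diagonal lam * Q * A = 0)
    (h2 : H.mulVec ρ + η + a • ξ + (Matrix.diagonal lam * Q).mulVec b = 0)
    (h3 : ∀ i, 0 < ξ i + η i) :
    IsCI {x | dotProduct c x < a} {x | ∀ i, Q.mulVec x i ≤ ρ i}
      (fun x => A.mulVec x + b) := by
  intro x hx hx0 T _ hD t ht i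
  have hderiv := fun s (hs : 0 ≤ s) => hx.hasDerivWithinAt_mulVec_sub Q ρ hs
  have hinv := nonpos_on_Icc_of_boundary_deriv_neg
    (fun s hs => (hderiv s hs.1).continuousWithinAt.mono Icc_subset_Ici_self)
    (fun s hs => (hderiv s hs.1).mono fun u hu => hs.1.trans (le_of_lt hu))
    (sub_nonpos.mpr hx0.1)
    (fun s hs hgs j hj => mulVec_affine_apply_neg_of_boundary hlam hH hη hξ h1 h2 h3 hgs
      (hD s (Ico_subset_Icc_self hs)) hj) t ht
  exact sub_nonpos.mp (hinv i)
end

section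
/- Facet condition for polyhedral continuous invariants (used in the proof of Proposition 2): Let A ∈ ℝ^{n×n}, b ∈ ℝ^{n×1}, c ∈ ℝ^{1×n}, a ∈ ℝ, Q ∈ ℝ^{r×n} with rows q_1, …, q_r and ρ ∈ ℝ^{r×1} with entries ρ_1, …, ρ_r. Suppose that for every i ∈ {1, …, r} and every x ∈ ℝⁿ, if Q x ≤ ρ, q_i x = ρ_i and c x < a, then q_i (A x + b) < 0. Then the polyhedron P = {x ∈ ℝⁿ : Q x ≤ ρ} is a continuous invariant of (D, f), where D = {x ∈ ℝⁿ : c x < a} and f(x) = A x + b. -/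
open MvPolynomial Set

/-!
Along a trajectory, the constraint values `g t = Q x(t)` stay below `ρ` by real induction on
`[0, T]`: the set of times where `g ≤ ρ` is closed, and from such a time it persists a little
to the right, since each inactive constraint `gᵢ < ρᵢ` stays inactive by continuity and each
active one `gᵢ = ρᵢ` strictly decreases by the facet condition.
-/

open Filter Topology Matrix

theorem HasDerivWithinAt.eventually_nhdsGT_lt_of_neg {f : ℝ → ℝ} {f' x : ℝ}
    (hf : HasDerivWithinAt f f' (Ici x) x) (hf' : f' < 0) : ∀ᶠ z in 𝓝[>] x, f z < f x := by
  filter_upwards [hf.Ioi_of_Ici.limsup_slope_le' (lt_irrefl x) hf', self_mem_nhdsWithin]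
    with z hslope hxz
  exact (slope_neg_iff_of_le hxz.le).1 hslope

theorem HasDerivWithinAt.eventually_nhdsGT_le {f : ℝ → ℝ} {f' x c : ℝ}
    (hf : HasDerivWithinAt f f' (Ici x) x) (hle : f x ≤ c) (hboundary : f x = c → f' < 0) :
    ∀ᶠ z in 𝓝[>] x, f z ≤ c := by
  rcases hle.lt_or_eq with hlt | heq
  · have hcont : ContinuousWithinAt f (Ioi x) x := hf.continuousWithinAt.mono Ioi_subset_Ici_self
    filter_upwards [hcont.eventually (gt_mem_nhds hlt)] with z hz using hz.le
  · filter_upwards [hf.eventually_nhdsGT_lt_of_neg (hboundary heq)] with z hz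
    exact heq ▸ hz.le

theorem image_le_of_deriv_right_neg_at_boundary {ι : Type*} [Finite ι] {g g' : ℝ → ι → ℝ}
    {ρ : ι → ℝ} {a b : ℝ} (hcont : ContinuousOn g (Icc a b))
    (hderiv : ∀ t ∈ Ico a b, HasDerivWithinAt g (g' t) (Ici t) t) (ha : g a ≤ ρ)
    (hboundary : ∀ t ∈ Ico a b, g t ≤ ρ → ∀ i, g t i = ρ i → g' t i < 0) :
    ∀ t ∈ Icc a b, g t ≤ ρ := by
  have hclosed : IsClosed (g ⁻¹' Iic ρ ∩ Icc a b) := by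
    rw [inter_comm]
    exact hcont.preimage_isClosed_of_isClosed isClosed_Icc isClosed_Iic
  refine hclosed.Icc_subset_of_forall_mem_nhdsWithin ha fun t ⟨hle, ht⟩ => ?_
  refine eventually_all.2 fun i => ?_
  exact (hasDerivWithinAt_pi.1 (hderiv t ht) i).eventually_nhdsGT_le (hle i)
    (hboundary t ht hle i)

theorem HasDerivWithinAt.matrix_mulVec {𝕜 m n : Type*} [NontriviallyNormedField 𝕜]
    [Fintype m] [Fintype n] {x : 𝕜 → n → 𝕜} {v : n → 𝕜} {s : Set 𝕜} {t : 𝕜}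
    (hx : HasDerivWithinAt x v s t) (Q : Matrix m n 𝕜) :
    HasDerivWithinAt (fun t => Q *ᵥ x t) (Q *ᵥ v) s t :=
  let L : (n → 𝕜) →L[𝕜] m → 𝕜 := ⟨Q.mulVecLin, continuous_const.matrix_mulVec continuous_id⟩
  L.hasFDerivAt.comp_hasDerivWithinAt t hx

/-- **Facet condition for polyhedral continuous invariants** (used in the proof
of Proposition 2): if on each facet of the polyhedron `{x | Q x ≤ ρ}` lying
inside the domain `{x | c x < a}` the vector field `A x + b` points strictly
inwards (`qᵢ (A x + b) < 0`), then the polyhedron is a continuous invariant of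
`({x | c x < a}, A x + b)`. -/
theorem polyhedral_ci_facet_condition {n r : ℕ}
    (A : Matrix (Fin n) (Fin n) ℝ) (b : Fin n → ℝ)
    (c : Fin n → ℝ) (a : ℝ)
    (Q : Matrix (Fin r) (Fin n) ℝ) (ρ : Fin r → ℝ)
    (hfacet : ∀ (i : Fin r) (x : Fin n → ℝ),
      (∀ j, Q.mulVec x j ≤ ρ j) → Q.mulVec x i = ρ i →
      dotProduct c x < a →
      Q.mulVec (A.mulVec x + b) i < 0) :
    IsCI {x | dotProduct c x < a} {x | ∀ i, Q.mulVec x i ≤ ρ i}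
      (fun x => A.mulVec x + b) := by
  intro x hx hx0 T _ hD
  have hderiv : ∀ t ∈ Ici (0 : ℝ),
      HasDerivWithinAt (fun t => Q *ᵥ x t) (Q *ᵥ (A *ᵥ x t + b)) (Ici 0) t :=
    fun t ht => HasDerivWithinAt.matrix_mulVec (hx t ht) Q
  exact image_le_of_deriv_right_neg_at_boundary
    (fun t ht => (hderiv t ht.1).continuousWithinAt.mono Icc_subset_Ici_self)
    (fun t ht => (hderiv t ht.1).mono (Ici_subset_Ici.2 ht.1)) hx0.1
    (fun t ht hle i heq => hfacet i (x t) hle heq (hD t (Ico_subset_Icc_self ht)))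
end

section
/- SOS relaxation sufficiency for continuous invariants: Let f be a polynomial vector field on ℝⁿ whose solutions exist and are unique on [0, ∞), and let p, h ∈ ℝ[x1, …, xn]. Suppose there exist sum-of-squares polynomials s1, s2 ∈ ℝ[x1, …, xn] and a real constant ε > 0 such that L¹_f p = s1 + s2·h + ε as polynomials. Then L¹_f p(x) > 0 for all x with h(x) > 0, and consequently P = {x ∈ ℝⁿ : p(x) ≥ 0} is a continuous invariant of (D, f) with D = {x ∈ ℝⁿ : h(x) > 0}. -/
open MvPolynomial Set

/-- `s` is a sum of squares of polynomials. -/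
def IsSOS {n : ℕ} (s : MvPolynomial (Fin n) ℝ) : Prop :=
  ∃ (m : ℕ) (q : Fin m → MvPolynomial (Fin n) ℝ), s = ∑ i, (q i) ^ 2

/-!
Along a solution `x(t)` the derivative of `p(x(t))` is `L¹_f p (x(t))`. The certificate makes
`L¹_f p = s₁ + s₂ h + ε` strictly positive wherever `h > 0`, so while a trajectory stays in
`D = {h > 0}` the value of `p` along it is nondecreasing and cannot leave `{p ≥ 0}`.
-/

lemma IsSOS.eval_nonneg {n : ℕ} {s : MvPolynomial (Fin n) ℝ} (hs : IsSOS s)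
    (x : Fin n → ℝ) :
    0 ≤ eval x s := by
  obtain ⟨m, q, rfl⟩ := hs
  simp only [map_sum, map_pow]
  exact Finset.sum_nonneg fun i _ => sq_nonneg _

lemma HasDerivWithinAt.mvPolynomial_eval {σ : Type*} [Fintype σ] [DecidableEq σ]
    (p : MvPolynomial σ ℝ) {x : ℝ → σ → ℝ} {v : σ → ℝ} {s : Set ℝ} {t : ℝ}
    (hx : ∀ i, HasDerivWithinAt (fun τ => x τ i) (v i) s t) :
    HasDerivWithinAt (fun τ => eval (x τ) p) (∑ i, eval (x t) (pderiv i p) * v i) s t := by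
  induction p using MvPolynomial.induction_on with
  | C a => simpa using hasDerivWithinAt_const t s a
  | add q r hq hr => simpa [Finset.sum_add_distrib, add_mul] using hq.fun_add hr
  | mul_X q i hq =>
      have leibniz : ∀ j, eval (x t) (pderiv j (q * X i)) * v j
          = eval (x t) (pderiv j q) * v j * x t i + if i = j then eval (x t) q * v j else 0 := by
        intro j
        simp only [Derivation.leibniz, pderiv_X, Pi.single_apply, smul_eq_mul, map_add, map_mul,
          eval_X, apply_ite (eval (x t)), map_one, map_zero]
        split_ifs <;> ring
      simp only [leibniz, Finset.sum_add_distrib, Finset.sum_ite_eq, Finset.mem_univ, if_true,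
        ← Finset.sum_mul, eval_mul, eval_X]
      exact hq.fun_mul (hx i)

lemma eval_lieDeriv_one {n : ℕ} (f : Fin n → MvPolynomial (Fin n) ℝ)
    (p : MvPolynomial (Fin n) ℝ) (x : Fin n → ℝ) :
    eval x (lieDeriv f p 1) = ∑ i, eval x (pderiv i p) * evalVF f x i := by
  simp [lieDeriv, evalVF]

lemma IsSolutionOn.hasDerivWithinAt_eval {n : ℕ} {f : Fin n → MvPolynomial (Fin n) ℝ}
    {x : ℝ → Fin n → ℝ} (hx : IsSolutionOn (evalVF f) x) (p : MvPolynomial (Fin n) ℝ)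
    {t : ℝ} (ht : 0 ≤ t) :
    HasDerivWithinAt (fun τ => eval (x τ) p) (eval (x t) (lieDeriv f p 1)) (Ici 0) t := by
  rw [eval_lieDeriv_one]
  exact .mvPolynomial_eval p fun i => hasDerivWithinAt_pi.1 (hx t ht) i

lemma isCI_nonneg_of_lieDeriv_nonneg {n : ℕ} (f : Fin n → MvPolynomial (Fin n) ℝ)
    (p : MvPolynomial (Fin n) ℝ) (D : Set (Fin n → ℝ))
    (hD : ∀ x ∈ D, 0 ≤ eval x (lieDeriv f p 1)) :
    IsCI D {x | 0 ≤ eval x p} (evalVF f) := by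
  intro x hx ⟨hp0, _⟩ T _ hxD t ht
  have hderiv : ∀ τ ∈ Icc (0 : ℝ) T,
      HasDerivWithinAt (fun σ => eval (x σ) p) (eval (x τ) (lieDeriv f p 1)) (Ici 0) τ :=
    fun τ hτ => hx.hasDerivWithinAt_eval p hτ.1
  have hmono : MonotoneOn (fun σ => eval (x σ) p) (Icc 0 T) := by
    refine monotoneOn_of_hasDerivWithinAt_nonneg (convex_Icc 0 T)
      (fun τ hτ => (hderiv τ hτ).continuousWithinAt.mono Icc_subset_Ici_self)
      (fun τ hτ => ?_) (fun τ hτ => hD _ (hxD τ (interior_subset hτ)))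
    rw [interior_Icc] at hτ ⊢
    exact (hderiv τ (Ioo_subset_Icc_self hτ)).mono (Ioo_subset_Icc_self.trans Icc_subset_Ici_self)
  exact hp0.trans (hmono (left_mem_Icc.2 (ht.1.trans ht.2)) ht ht.1)

theorem sos_relaxation_ci_general {n : ℕ} (f : Fin n → MvPolynomial (Fin n) ℝ)
    (p h s1 s2 : MvPolynomial (Fin n) ℝ) (ε : ℝ)
    (hs1 : IsSOS s1) (hs2 : IsSOS s2) (hε : 0 < ε)
    (heq : lieDeriv f p 1 = s1 + s2 * h + C ε) :
    (∀ x : Fin n → ℝ, 0 < eval x h → 0 < eval x (lieDeriv f p 1)) ∧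
    IsCI {x | 0 < eval x h} {x | 0 ≤ eval x p} (evalVF f) := by
  have hpos : ∀ x : Fin n → ℝ, 0 < eval x h → 0 < eval x (lieDeriv f p 1) := by
    intro x hx
    have hs2h := mul_nonneg (hs2.eval_nonneg x) hx.le
    rw [heq, eval_add, eval_add, eval_mul, eval_C]
    linarith [hs1.eval_nonneg x]
  exact ⟨hpos, isCI_nonneg_of_lieDeriv_nonneg f p _ fun x hx => (hpos x hx).le⟩

/-- **SOS relaxation sufficiency for continuous invariants.** If
`L¹_f p = s₁ + s₂ · h + ε` with `s₁, s₂` sums of squares and `ε > 0`, then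
`L¹_f p > 0` on `{h > 0}`, and `{p ≥ 0}` is a continuous invariant of
`({h > 0}, f)`. -/
theorem sos_relaxation_ci {n : ℕ} (f : Fin n → MvPolynomial (Fin n) ℝ)
    (p h s1 s2 : MvPolynomial (Fin n) ℝ) (ε : ℝ)
    (hflow : CompleteFlow (evalVF f))
    (hs1 : IsSOS s1) (hs2 : IsSOS s2) (hε : 0 < ε)
    (heq : lieDeriv f p 1 = s1 + s2 * h + C ε) :
    (∀ x : Fin n → ℝ, 0 < eval x h → 0 < eval x (lieDeriv f p 1)) ∧
    IsCI {x | 0 < eval x h} {x | 0 ≤ eval x p} (evalVF f) :=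
  sos_relaxation_ci_general f p h s1 s2 ε hs1 hs2 hε heq
end

section
/- Taylor expansion of a polynomial along a trajectory: Let f be a polynomial vector field on ℝⁿ, p ∈ ℝ[x1, …, xn] a polynomial, and x : ℝ → ℝⁿ a differentiable function satisfying x'(t) = f(x(t)) for all t ∈ ℝ with x(0) = x0. Then the function t ↦ p(x(t)) is real-analytic at 0, and there exists a neighborhood of 0 on which p(x(t)) = Σ_{i=0}^∞ L^i_f p(x0) · tⁱ / i!, the series converging for all t in that neighborhood. -/
open MvPolynomial Set

/-!
Along the trajectory, `G k t := (L^k_f p)(x t)` satisfies `(G k)' = G (k + 1)`, so the Taylor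
coefficients of `p ∘ x` at `0` are `L^k_f p(x₀) / k!`. To see that the Taylor series converges to
`p ∘ x`, measure polynomials by the weighted ℓ¹ norm `‖q‖_R = ∑ |c_m| R^|m|`: it is
submultiplicative, dominates `|q y|` for `‖y‖ ≤ R`, and `‖∂ᵢ q‖_R ≤ deg q · ‖q‖_R` for `R ≥ 1`.
Since `deg L^k p` grows linearly in `k`, this gives `|G k| ≤ C M^k k!` on `[-1, 1]`, and the
remainder estimate `|G 0 t - ∑_{k<N} G k 0 t^k / k!| ≤ C (M |t|)^N` gives convergence for small `t`.
-/

open Finset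
open scoped Nat

namespace MvPolynomial

variable {σ : Type*}

noncomputable def weightedNorm (R : ℝ) (q : MvPolynomial σ ℝ) : ℝ :=
  ∑ m ∈ q.support, |coeff m q| * R ^ m.degree

variable {R : ℝ}

theorem weightedNorm_eq_sum_of_support_subset {q : MvPolynomial σ ℝ} {S : Finset (σ →₀ ℕ)}
    (hS : q.support ⊆ S) : weightedNorm R q = ∑ m ∈ S, |coeff m q| * R ^ m.degree :=
  sum_subset hS fun m _ hm => by simp [notMem_support_iff.mp hm]

theorem weightedNorm_nonneg (hR : 0 ≤ R) (q : MvPolynomial σ ℝ) : 0 ≤ weightedNorm R q :=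
  sum_nonneg fun _ _ => by positivity

theorem weightedNorm_add_le (hR : 0 ≤ R) (q r : MvPolynomial σ ℝ) :
    weightedNorm R (q + r) ≤ weightedNorm R q + weightedNorm R r := by
  classical
  rw [weightedNorm_eq_sum_of_support_subset support_add,
    weightedNorm_eq_sum_of_support_subset (subset_union_left (s₂ := r.support)),
    weightedNorm_eq_sum_of_support_subset (subset_union_right (s₁ := q.support)),
    ← sum_add_distrib]
  gcongr with m
  rw [← add_mul, coeff_add]
  gcongr
  exact abs_add_le _ _

theorem weightedNorm_sum_le (hR : 0 ≤ R) {ι : Type*} (s : Finset ι)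
    (q : ι → MvPolynomial σ ℝ) :
    weightedNorm R (∑ j ∈ s, q j) ≤ ∑ j ∈ s, weightedNorm R (q j) :=
  le_sum_of_subadditive _ (by simp [weightedNorm]) (weightedNorm_add_le hR) s q

theorem weightedNorm_monomial (m : σ →₀ ℕ) (a : ℝ) :
    weightedNorm R (monomial m a) = |a| * R ^ m.degree := by
  classical
  by_cases ha : a = 0
  · simp [ha, weightedNorm]
  · rw [weightedNorm, support_monomial, if_neg ha, sum_singleton, coeff_monomial, if_pos rfl]

theorem weightedNorm_monomial_mul_le (hR : 0 ≤ R) (m : σ →₀ ℕ) (a : ℝ)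
    (q : MvPolynomial σ ℝ) :
    weightedNorm R (monomial m a * q) ≤ |a| * R ^ m.degree * weightedNorm R q := by
  conv_lhs => rw [q.as_sum, mul_sum]
  refine (weightedNorm_sum_le hR _ _).trans_eq ?_
  rw [weightedNorm, mul_sum]
  refine sum_congr rfl fun b _ => ?_
  rw [monomial_mul, weightedNorm_monomial, abs_mul, map_add, pow_add]
  ring

theorem weightedNorm_mul_le (hR : 0 ≤ R) (q r : MvPolynomial σ ℝ) :
    weightedNorm R (q * r) ≤ weightedNorm R q * weightedNorm R r := by
  conv_lhs => rw [q.as_sum, sum_mul]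
  refine (weightedNorm_sum_le hR _ _).trans ?_
  rw [weightedNorm, sum_mul]
  exact sum_le_sum fun m _ => weightedNorm_monomial_mul_le hR _ _ _

theorem abs_eval_le_weightedNorm [Fintype σ] {y : σ → ℝ} (hy : ‖y‖ ≤ R)
    (q : MvPolynomial σ ℝ) : |eval y q| ≤ weightedNorm R q := by
  rw [eval_eq']
  refine (abs_sum_le_sum_abs _ _).trans (sum_le_sum fun m _ => ?_)
  rw [abs_mul, Finsupp.degree_eq_sum, ← prod_pow_eq_pow_sum, abs_prod]
  gcongr with i
  rw [abs_pow]
  gcongr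
  exact (norm_le_pi_norm y i).trans hy

theorem totalDegree_pderiv_le {S : Type*} [CommSemiring S] (i : σ) (q : MvPolynomial σ S) :
    (pderiv i q).totalDegree ≤ q.totalDegree := by
  classical
  conv_lhs => rw [q.as_sum, map_sum]
  refine (totalDegree_finsetSum _ _).trans (Finset.sup_le fun m hm => ?_)
  rw [pderiv_monomial]
  refine (totalDegree_monomial_le _ _).trans ((le_totalDegree hm).trans' ?_)
  exact Finsupp.degree_mono tsub_le_self

theorem weightedNorm_pderiv_le (hR : 1 ≤ R) (i : σ) (q : MvPolynomial σ ℝ) :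
    weightedNorm R (pderiv i q) ≤ q.totalDegree * weightedNorm R q := by
  classical
  conv_lhs => rw [q.as_sum, map_sum]
  refine (weightedNorm_sum_le (by linarith) _ _).trans ?_
  rw [weightedNorm, mul_sum]
  refine sum_le_sum fun m hm => ?_
  have hmi : (m i : ℝ) ≤ q.totalDegree := mod_cast (m.le_degree i).trans (le_totalDegree hm)
  rw [pderiv_monomial, weightedNorm_monomial, abs_mul, Nat.abs_cast]
  calc |coeff m q| * m i * R ^ (m - Finsupp.single i 1).degree
      ≤ |coeff m q| * q.totalDegree * R ^ m.degree := by
        gcongr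
        exact Finsupp.degree_mono tsub_le_self
    _ = q.totalDegree * (|coeff m q| * R ^ m.degree) := by ring

theorem hasDerivAt_eval_comp [Fintype σ] {x : ℝ → σ → ℝ}
    {v : σ → ℝ} {t : ℝ} (hx : HasDerivAt x v t) (q : MvPolynomial σ ℝ) :
    HasDerivAt (fun s => eval (x s) q) (∑ i, eval (x t) (pderiv i q) * v i) t := by
  induction q using MvPolynomial.induction_on with
  | C a => simpa using hasDerivAt_const t a
  | add q r hq hr => simpa [add_mul, sum_add_distrib] using hq.fun_add hr
  | mul_X q j hq =>
    classical
    simp only [map_mul, eval_X]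
    refine (hq.fun_mul (hasDerivAt_pi.mp hx j)).congr_deriv ?_
    simp only [Derivation.leibniz, pderiv_X, smul_eq_mul, map_add, map_mul, eval_X, add_mul,
      sum_add_distrib, Pi.single_apply, apply_ite (eval (x t)), map_zero, mul_ite,
      mul_one, mul_zero, ite_mul, zero_mul, Fintype.sum_ite_eq, sum_mul]
    rw [add_comm]
    congr 1
    exact sum_congr rfl fun i _ => by ring

end MvPolynomial

section LieDerivative

variable {n : ℕ} (f : Fin n → MvPolynomial (Fin n) ℝ) (p : MvPolynomial (Fin n) ℝ)

theorem totalDegree_lieDeriv_le (k : ℕ) :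
    (lieDeriv f p k).totalDegree ≤ p.totalDegree + k * univ.sup fun i => (f i).totalDegree := by
  induction k with
  | zero => simp [lieDeriv]
  | succ k ih =>
    refine (totalDegree_finsetSum _ _).trans (Finset.sup_le fun i _ => ?_)
    grw [totalDegree_mul, totalDegree_pderiv_le, ih,
      Finset.le_sup (f := fun i => (f i).totalDegree) (mem_univ i)]
    linarith

theorem weightedNorm_lieDeriv_le {R : ℝ} (hR : 1 ≤ R) (k : ℕ) :
    weightedNorm R (lieDeriv f p k) ≤ weightedNorm R p *
      (((p.totalDegree + univ.sup fun i => (f i).totalDegree : ℕ) : ℝ) *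
        ∑ i, weightedNorm R (f i)) ^ k * k ! := by
  set D : ℕ := p.totalDegree + univ.sup fun i => (f i).totalDegree with hD
  set F : ℝ := ∑ i, weightedNorm R (f i)
  have hR0 : 0 ≤ R := by linarith
  have hF : 0 ≤ F := sum_nonneg fun i _ => weightedNorm_nonneg hR0 _
  induction k with
  | zero => simp [lieDeriv]
  | succ k ih =>
    have hdeg : ((lieDeriv f p k).totalDegree : ℝ) ≤ D * (k + 1) :=
      mod_cast (totalDegree_lieDeriv_le f p k).trans (by rw [hD]; nlinarith)
    calc weightedNorm R (lieDeriv f p (k + 1))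
        ≤ ∑ i, weightedNorm R (pderiv i (lieDeriv f p k)) * weightedNorm R (f i) :=
          (weightedNorm_sum_le hR0 _ _).trans
            (sum_le_sum fun i _ => weightedNorm_mul_le hR0 _ _)
      _ ≤ ∑ i, (lieDeriv f p k).totalDegree * weightedNorm R (lieDeriv f p k) *
            weightedNorm R (f i) := by
          gcongr with i
          · exact weightedNorm_nonneg hR0 _
          · exact weightedNorm_pderiv_le hR i _
      _ = (lieDeriv f p k).totalDegree * weightedNorm R (lieDeriv f p k) * F := by
          rw [← mul_sum]
      _ ≤ D * (k + 1) * (weightedNorm R p * (D * F) ^ k * k !) * F := by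
          gcongr
          exact weightedNorm_nonneg hR0 _
      _ = weightedNorm R p * (D * F) ^ (k + 1) * (k + 1)! := by
          rw [Nat.factorial_succ]
          push_cast
          ring

end LieDerivative

theorem hasDerivAt_eval_lieDeriv {n : ℕ} {f : Fin n → MvPolynomial (Fin n) ℝ}
    (p : MvPolynomial (Fin n) ℝ) {x : ℝ → Fin n → ℝ}
    {t : ℝ} (hx : HasDerivAt x (evalVF f (x t)) t) (k : ℕ) :
    HasDerivAt (fun s => eval (x s) (lieDeriv f p k)) (eval (x t) (lieDeriv f p (k + 1))) t := by
  simpa [lieDeriv, evalVF] using hasDerivAt_eval_comp hx (lieDeriv f p k)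

theorem hasDerivAt_sum_range_div_factorial_mul_pow (a : ℕ → ℝ) (N : ℕ) (s : ℝ) :
    HasDerivAt (fun u => ∑ k ∈ range (N + 1), a k / k ! * u ^ k)
      (∑ k ∈ range N, a (k + 1) / k ! * s ^ k) s := by
  refine (HasDerivAt.fun_sum fun k _ => (hasDerivAt_pow k s).const_mul (a k / k !)).congr_deriv ?_
  rw [sum_range_succ']
  simp only [Nat.cast_zero, zero_mul, mul_zero, add_zero, Nat.add_sub_cancel, Nat.factorial_succ]
  refine sum_congr rfl fun k _ => ?_
  push_cast
  field_simp

section DerivativeChain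

variable {G : ℕ → ℝ → ℝ} (hG : ∀ k s, HasDerivAt (G k) (G (k + 1) s) s)
include hG

theorem abs_sub_sum_taylor_le_of_nonneg (N : ℕ) {K t : ℝ} (ht : 0 ≤ t)
    (hb : ∀ s ∈ Icc 0 t, |G N s| ≤ K) :
    |G 0 t - ∑ k ∈ range N, G k 0 / k ! * t ^ k| ≤ K * t ^ N / N ! := by
  induction N generalizing G t with
  | zero => simpa using hb t ⟨ht, le_rfl⟩
  | succ N ih =>
    have hrem (s : ℝ) : HasDerivAt (fun u => G 0 u - ∑ k ∈ range (N + 1), G k 0 / k ! * u ^ k)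
        (G 1 s - ∑ k ∈ range N, G (k + 1) 0 / k ! * s ^ k) s :=
      (hG 0 s).sub (hasDerivAt_sum_range_div_factorial_mul_pow (fun k => G k 0) N s)
    have hbound (s : ℝ) :
        HasDerivAt (fun u => K * u ^ (N + 1) / (N + 1)!) (K * s ^ N / N !) s := by
      refine ((hasDerivAt_pow (N + 1) s).const_mul K |>.div_const _).congr_deriv ?_
      rw [Nat.factorial_succ]
      push_cast
      field_simp
    have := image_norm_le_of_norm_deriv_right_le_deriv_boundary
      (fun s _ => (hrem s).continuousAt.continuousWithinAt) (fun s _ => (hrem s).hasDerivWithinAt)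
      (by simp [sum_range_succ']) hbound
      (fun s hs => ih (fun k => hG (k + 1)) hs.1 fun u hu => hb u ⟨hu.1, hu.2.trans hs.2.le⟩)
      ⟨ht, le_rfl⟩
    simpa using this

theorem abs_sub_sum_taylor_le (N : ℕ) {K t : ℝ} (hb : ∀ s ∈ uIcc 0 t, |G N s| ≤ K) :
    |G 0 t - ∑ k ∈ range N, G k 0 / k ! * t ^ k| ≤ K * |t| ^ N / N ! := by
  rcases le_total 0 t with ht | ht
  · rw [abs_of_nonneg ht]
    exact abs_sub_sum_taylor_le_of_nonneg hG N ht fun s hs => hb s (Icc_subset_uIcc hs)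
  · have hreflect (k : ℕ) (s : ℝ) : HasDerivAt (fun u => (-1) ^ k * G k (-u))
        ((-1) ^ (k + 1) * G (k + 1) (-s)) s := by
      simpa [pow_succ, mul_assoc] using ((hG k (-s)).comp s (hasDerivAt_neg s)).const_mul ((-1) ^ k)
    have hterm (k : ℕ) : (-1) ^ k * G k 0 / k ! * (-t) ^ k = G k 0 / k ! * t ^ k := by
      have hsign : (-1 : ℝ) ^ k * (-t) ^ k = t ^ k := by rw [← mul_pow]; simp
      linear_combination G k 0 / k ! * hsign
    have := abs_sub_sum_taylor_le_of_nonneg (G := fun k u => (-1) ^ k * G k (-u)) hreflect N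
      (neg_nonneg.2 ht) fun s hs => by
        simpa using hb (-s) (Icc_subset_uIcc' ⟨by linarith [hs.2], by linarith [hs.1]⟩)
    simpa [hterm, abs_of_nonpos ht] using this

theorem exists_hasSum_taylor_of_bound {r C M : ℝ} (hr : 0 < r) (hM : 0 ≤ M)
    (hb : ∀ k, ∀ s ∈ Icc (-r) r, |G k s| ≤ C * M ^ k * k !) :
    ∃ ε > 0, ∀ t, |t| < ε → HasSum (fun k => G k 0 / k ! * t ^ k) (G 0 t) := by
  refine ⟨min r (M + 1)⁻¹, by positivity, fun t ht => ?_⟩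
  have htr : t ∈ Icc (-r) r := abs_le.mp (ht.le.trans (min_le_left _ _))
  have hq : M * |t| < 1 := calc
    M * |t| ≤ M * (M + 1)⁻¹ := by gcongr; exact ht.le.trans (min_le_right _ _)
    _ < 1 := by rw [← div_eq_mul_inv, div_lt_one (by positivity)]; linarith
  have hcancel (k : ℕ) : C * M ^ k * k ! * |t| ^ k / k ! = C * (M * |t|) ^ k := by
    field_simp
    ring
  have hterm (k : ℕ) : ‖G k 0 / k ! * t ^ k‖ ≤ C * (M * |t|) ^ k := by
    rw [← hcancel, norm_mul, norm_div, norm_pow, Real.norm_eq_abs, Real.norm_eq_abs,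
      Real.norm_eq_abs, Nat.abs_cast, div_mul_eq_mul_div]
    gcongr
    exact hb k 0 ⟨by linarith, hr.le⟩
  have hsummable : Summable fun k => ‖G k 0 / k ! * t ^ k‖ :=
    .of_nonneg_of_le (fun _ => norm_nonneg _) hterm
      ((summable_geometric_of_lt_one (by positivity) hq).mul_left C)
  rw [hasSum_iff_tendsto_nat_of_summable_norm hsummable, tendsto_iff_norm_sub_tendsto_zero]
  refine squeeze_zero (fun _ => norm_nonneg _) (fun N => ?_)
    (by simpa using (tendsto_pow_atTop_nhds_zero_of_lt_one (by positivity) hq).const_mul C)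
  rw [norm_sub_rev, Real.norm_eq_abs, ← hcancel]
  exact abs_sub_sum_taylor_le hG N fun s hs => hb N s (uIcc_subset_Icc ⟨by linarith, hr.le⟩ htr hs)

end DerivativeChain

theorem analyticAt_of_hasSum_mul_pow {g : ℝ → ℝ} {a : ℕ → ℝ} {ε : ℝ} (hε : 0 < ε)
    (h : ∀ t, |t| < ε → HasSum (fun k => a k * t ^ k) (g t)) : AnalyticAt ℝ g 0 := by
  refine ⟨.ofScalars ℝ a, ENNReal.ofReal ε, ?_, ENNReal.ofReal_pos.2 hε, fun {y} hy => ?_⟩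
  · refine ENNReal.le_of_forall_nnreal_lt fun r hr => ?_
    have hr' : |(r : ℝ)| < ε := by
      rw [NNReal.abs_eq]
      exact (ENNReal.coe_lt_ofReal).1 hr
    refine FormalMultilinearSeries.le_radius_of_tendsto _ (l := 0) ?_
    simpa [FormalMultilinearSeries.ofScalars_norm] using (h r hr').summable.tendsto_atTop_zero.norm
  · rw [Metric.eball_ofReal, Metric.mem_ball, dist_zero_right, Real.norm_eq_abs] at hy
    simpa [FormalMultilinearSeries.ofScalars_apply_eq, mul_comm] using h y hy

/-- **Taylor expansion of a polynomial along a trajectory.** If `x : ℝ → ℝⁿ`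
satisfies `ẋ(t) = f(x(t))` for all `t` and `x(0) = x₀`, then `t ↦ p(x(t))` is
real-analytic at `0`, and on some neighborhood of `0` it is the sum of the
convergent series `Σᵢ L^i_f p(x₀) · tⁱ / i!`. -/
theorem taylor_along_trajectory {n : ℕ} (f : Fin n → MvPolynomial (Fin n) ℝ)
    (p : MvPolynomial (Fin n) ℝ) (x : ℝ → (Fin n → ℝ)) (x0 : Fin n → ℝ)
    (hx : ∀ t : ℝ, HasDerivAt x (evalVF f (x t)) t) (hx0 : x 0 = x0) :
    AnalyticAt ℝ (fun t => eval (x t) p) 0 ∧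
    ∃ ε > (0:ℝ), ∀ t : ℝ, |t| < ε →
      HasSum (fun i : ℕ => eval x0 (lieDeriv f p i) * t ^ i / (Nat.factorial i))
        (eval (x t) p) := by
  obtain ⟨R, hR⟩ := (isCompact_Icc (a := -1) (b := 1)).exists_bound_of_continuousOn
    (continuous_iff_continuousAt.2 fun t => (hx t).continuousAt).continuousOn
  have hR1 : 1 ≤ max R 1 := le_max_right _ _
  obtain ⟨ε, hε, hsum⟩ := exists_hasSum_taylor_of_bound
    (G := fun k s => eval (x s) (lieDeriv f p k))
    (fun k s => hasDerivAt_eval_lieDeriv p (hx s) k) one_pos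
    (mul_nonneg (Nat.cast_nonneg _) (sum_nonneg fun i _ => weightedNorm_nonneg (by linarith) _))
    fun k s hs => (abs_eval_le_weightedNorm ((hR s hs).trans (le_max_left _ _)) _).trans
      (weightedNorm_lieDeriv_le f p hR1 k)
  refine ⟨analyticAt_of_hasSum_mul_pow hε hsum, ε, hε, fun t ht => ?_⟩
  simpa [hx0, div_mul_eq_mul_div, lieDeriv] using hsum t ht
end

section
/- Exit lemma for continuous invariants with open domain (claim (r3) in the proof of Theorem 1): Let f be a vector field on ℝⁿ whose solutions exist and are unique on [0, ∞), let H ⊆ ℝⁿ be open, and let D' ⊆ ℝⁿ be a closed set that is a continuous invariant of (H, f). Let x(t) be the solution of ẋ = f(x) with x(0) = x0 ∈ D' ∩ H, and suppose T* := sup{T ≥ 0 : x(t) ∈ D' ∩ H for all t ∈ [0, T)} is finite. Then x(T*) ∈ D' and x(T*) ∉ H. -/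
open MvPolynomial Set

open Topology Filter

/-- **Exit lemma for continuous invariants with open domain** (claim (r3) in the
proof of Theorem 1): if `D'` is a closed continuous invariant of `(H, F)` with
`H` open, `x` is the solution starting at `x₀ ∈ D' ∩ H`, and
`T* = sup {T ≥ 0 | ∀ t ∈ [0, T), x(t) ∈ D' ∩ H}` is finite, then
`x(T*) ∈ D'` and `x(T*) ∉ H`. -/
theorem exit_lemma {n : ℕ} (F : (Fin n → ℝ) → (Fin n → ℝ))
    (hflow : CompleteFlow F)
    (H D' : Set (Fin n → ℝ)) (hH : IsOpen H) (hD' : IsClosed D')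
    (hCI : IsCI H D' F)
    (x : ℝ → (Fin n → ℝ)) (hx : IsSolutionOn F x) (hx0 : x 0 ∈ D' ∩ H)
    (Tstar : ℝ)
    (hbdd : BddAbove {T : ℝ | 0 ≤ T ∧ ∀ t ∈ Ico (0:ℝ) T, x t ∈ D' ∩ H})
    (hT : Tstar = sSup {T : ℝ | 0 ≤ T ∧ ∀ t ∈ Ico (0:ℝ) T, x t ∈ D' ∩ H}) :
    x Tstar ∈ D' ∧ x Tstar ∉ H := by
  set S : Set ℝ := {T : ℝ | 0 ≤ T ∧ ∀ t ∈ Ico (0:ℝ) T, x t ∈ D' ∩ H} with hS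
  have h0S : (0:ℝ) ∈ S := ⟨le_refl 0, fun t ht => absurd ht.2 (not_lt.2 ht.1)⟩
  have hTs0 : 0 ≤ Tstar := hT ▸ le_csSup hbdd h0S
  have step1 : ∀ t ∈ Ico (0:ℝ) Tstar, x t ∈ D' ∩ H := by
    intro t ht
    obtain ⟨T, hTS, htT⟩ := exists_lt_of_lt_csSup ⟨0, h0S⟩ (hT ▸ ht.2)
    exact hTS.2 t ⟨ht.1, htT⟩
  have hc : ContinuousWithinAt x (Ici 0) Tstar := (hx Tstar hTs0).continuousWithinAt
  have hmemD : x Tstar ∈ D' := by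
    rcases eq_or_lt_of_le hTs0 with h0 | h0
    · rw [← h0]; exact hx0.1
    · have hcl : Tstar ∈ closure (Ico (0:ℝ) Tstar) := by
        rw [closure_Ico (ne_of_lt h0)]
        exact ⟨hTs0, le_refl _⟩
      have hne : (𝓝[Ico (0:ℝ) Tstar] Tstar).NeBot :=
        mem_closure_iff_nhdsWithin_neBot.mp hcl
      have htd : Filter.Tendsto x (𝓝[Ico (0:ℝ) Tstar] Tstar) (𝓝 (x Tstar)) :=
        hc.mono (fun t ht => ht.1)
      exact hD'.mem_of_tendsto htd
        (eventually_mem_nhdsWithin.mono (fun t ht => (step1 t ht).1))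
  refine ⟨hmemD, fun hmem => ?_⟩
  have hpre : x ⁻¹' H ∈ 𝓝[Ici (0:ℝ)] Tstar := hc (hH.mem_nhds hmem)
  obtain ⟨U, hUo, hTU, hU⟩ := mem_nhdsWithin.mp hpre
  obtain ⟨ε, hε, hball⟩ := Metric.isOpen_iff.mp hUo Tstar hTU
  have HX : ∀ t ∈ Icc (0:ℝ) (Tstar + ε/2), x t ∈ H := by
    intro t ht
    rcases lt_or_ge t Tstar with h | h
    · exact (step1 t ⟨ht.1, h⟩).2
    · have : t ∈ Metric.ball Tstar ε := by
        rw [Metric.mem_ball, Real.dist_eq, abs_of_nonneg (by linarith)]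
        linarith [ht.2]
      exact hU ⟨hball this, ht.1⟩
  have hD2 := hCI x hx hx0 (Tstar + ε/2) (by linarith) HX
  have hmemS : Tstar + ε/2 ∈ S :=
    ⟨by linarith, fun t ht => ⟨hD2 t ⟨ht.1, ht.2.le⟩, HX t ⟨ht.1, ht.2.le⟩⟩⟩
  have := le_csSup hbdd hmemS
  rw [← hT] at this
  linarith
end

section
/- Correctness of the synthesized invariant for mode q2 of the nuclear reactor system: Consider the planar affine vector field f(p, x) = (1, x/10 − 6p − 50), i.e. the ODE ṗ = 1, ẋ = x/10 − 6p − 50. Let D₂' = {(p, x) ∈ ℝ² : 0 ≤ p ≤ 1 ∧ x − 4135/8 ≥ p·(6145/12 − 4135/8) ∧ x − 550 − (36/25)·(6575/12 − 550)·(p − 5/6)² ≤ 0} and let H₂ = ℝ² \ {(p, x) : p = 1 ∧ 6145/12 ≤ x ≤ 550}. Then D₂' is a continuous invariant of (H₂, f): for every solution (p(t), x(t)) of the ODE with (p(0), x(0)) ∈ D₂' and every T ≥ 0, if (p(t), x(t)) ∈ H₂ for all t ∈ [0, T], then (p(t), x(t)) ∈ D₂' for all t ∈ [0, T]. -/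
open Set

/-- The synthesized refined domain `D₂'` for mode `q₂` of the nuclear reactor
system (coordinates `(p, x)`). -/
def D2' : Set (ℝ × ℝ) :=
  {v | 0 ≤ v.1 ∧ v.1 ≤ 1 ∧
       v.1 * (6145 / 12 - 4135 / 8) ≤ v.2 - 4135 / 8 ∧
       v.2 - 550 - (36 / 25) * (6575 / 12 - 550) * (v.1 - 5 / 6) ^ 2 ≤ 0}

/-- The domain `H₂ = ℝ² \ G₂₃'` for mode `q₂`. -/
def H2 : Set (ℝ × ℝ) :=
  {v | ¬ (v.1 = 1 ∧ 6145 / 12 ≤ v.2 ∧ v.2 ≤ 550)}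

/-!
Along a solution, `p` grows at unit speed and both curved sides of `D₂'` are barriers. For the
slacks `ℓ = x - 4135/8 - p (6145/12 - 4135/8)` of the lower line and
`u = 550 - 3 (p - 5/6)² - x` of the upper parabola the ODE gives
`ℓ' = ℓ/10 + (311/48)(1 - p)` and `u' = u/10 + (3/10)(p - 5/6)²`, so by Grönwall `u` stays
nonnegative for all time and `ℓ` as long as `p ≤ 1`. If the trajectory reached `p = 1` within
`[0, T]`, both slacks would be nonnegative there, putting it on the excluded segment
`{1} × [6145/12, 550]`, which `H₂` forbids. Hence `p < 1` on `[0, T]` and the trajectory stays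
in `D₂'`.
-/

theorem nonneg_of_mul_le_deriv_right {f f' : ℝ → ℝ} {K a b : ℝ}
    (hf : ContinuousOn f (Icc a b))
    (hf' : ∀ x ∈ Ico a b, HasDerivWithinAt f (f' x) (Ici x) x)
    (ha : 0 ≤ f a) (bound : ∀ x ∈ Ico a b, K * f x ≤ f' x) :
    ∀ x ∈ Icc a b, 0 ≤ f x := by
  intro x hx
  have h := le_gronwallBound_of_liminf_deriv_right_le (f := -f) (f' := -f') (δ := 0) (ε := 0)
    hf.neg (fun y hy _r hr => (hf' y hy).neg.liminf_right_slope_le hr) (by simpa using ha)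
    (fun y hy => by simpa [mul_neg] using bound y hy) x hx
  simpa [gronwallBound_ε0_δ0] using h

theorem eq_add_mul_of_hasDerivAt_const {f : ℝ → ℝ} {c : ℝ} (hf : ∀ t, HasDerivAt f c t)
    (t : ℝ) : f t = f 0 + c * t := by
  have hg : ∀ t, HasDerivAt (fun t => f t - c * t) 0 t := fun t =>
    ((hf t).sub ((hasDerivAt_id t).const_mul c)).congr_deriv (by ring)
  have := is_const_of_deriv_eq_zero (fun t => (hg t).differentiableAt) (fun t => (hg t).deriv) t 0
  simp only [mul_zero, sub_zero] at this
  linarith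

noncomputable def lowerSlack (v : ℝ × ℝ) : ℝ := v.2 - 4135 / 8 - v.1 * (6145 / 12 - 4135 / 8)

noncomputable def upperSlack (v : ℝ × ℝ) : ℝ :=
  550 + 36 / 25 * (6575 / 12 - 550) * (v.1 - 5 / 6) ^ 2 - v.2

theorem mem_D2'_iff {v : ℝ × ℝ} :
    v ∈ D2' ↔ 0 ≤ v.1 ∧ v.1 ≤ 1 ∧ 0 ≤ lowerSlack v ∧ 0 ≤ upperSlack v := by
  simp only [D2', lowerSlack, upperSlack, mem_ofPred_eq]
  constructor <;> rintro ⟨h₁, h₂, h₃, h₄⟩ <;> exact ⟨h₁, h₂, by linarith, by linarith⟩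

theorem notMem_H2_of_slack_nonneg {v : ℝ × ℝ} (h1 : v.1 = 1) (hl : 0 ≤ lowerSlack v)
    (hu : 0 ≤ upperSlack v) : v ∉ H2 := by
  simp only [lowerSlack, upperSlack, h1] at hl hu
  simp only [H2, mem_ofPred_eq, not_not]
  exact ⟨h1, by linarith, by linarith⟩

section Trajectory

variable {p x : ℝ → ℝ}

theorem hasDerivAt_lowerSlack (hp : ∀ t, HasDerivAt p 1 t)
    (hx : ∀ t, HasDerivAt x (x t / 10 - 6 * p t - 50) t) (t : ℝ) :
    HasDerivAt (fun t => lowerSlack (p t, x t))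
      (lowerSlack (p t, x t) / 10 + 311 / 48 * (1 - p t)) t := by
  refine ((hx t).sub_const (4135 / 8)).sub ((hp t).mul_const (6145 / 12 - 4135 / 8))
    |>.congr_deriv ?_
  simp only [lowerSlack]
  ring

theorem hasDerivAt_upperSlack (hp : ∀ t, HasDerivAt p 1 t)
    (hx : ∀ t, HasDerivAt x (x t / 10 - 6 * p t - 50) t) (t : ℝ) :
    HasDerivAt (fun t => upperSlack (p t, x t))
      (upperSlack (p t, x t) / 10 + 3 / 10 * (p t - 5 / 6) ^ 2) t := by
  have hsq := ((hp t).sub_const (5 / 6)).pow 2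
  refine ((hsq.const_mul (36 / 25 * (6575 / 12 - 550))).const_add 550).sub (hx t)
    |>.congr_deriv ?_
  simp only [upperSlack]
  push_cast
  ring

theorem lowerSlack_nonneg (hp : ∀ t, HasDerivAt p 1 t)
    (hx : ∀ t, HasDerivAt x (x t / 10 - 6 * p t - 50) t) {b : ℝ}
    (h0 : 0 ≤ lowerSlack (p 0, x 0)) (hp1 : ∀ t ∈ Icc 0 b, p t ≤ 1) :
    ∀ t ∈ Icc 0 b, 0 ≤ lowerSlack (p t, x t) := by
  have hd := hasDerivAt_lowerSlack hp hx
  refine nonneg_of_mul_le_deriv_right (K := 1 / 10)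
    (fun t _ => (hd t).continuousAt.continuousWithinAt)
    (fun t _ => (hd t).hasDerivWithinAt) h0 fun t ht => ?_
  linarith [hp1 t (Ico_subset_Icc_self ht)]

theorem upperSlack_nonneg (hp : ∀ t, HasDerivAt p 1 t)
    (hx : ∀ t, HasDerivAt x (x t / 10 - 6 * p t - 50) t)
    (h0 : 0 ≤ upperSlack (p 0, x 0)) {t : ℝ} (ht : 0 ≤ t) :
    0 ≤ upperSlack (p t, x t) := by
  have hd := hasDerivAt_upperSlack hp hx
  refine nonneg_of_mul_le_deriv_right (K := 1 / 10) (b := t)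
    (fun s _ => (hd s).continuousAt.continuousWithinAt)
    (fun s _ => (hd s).hasDerivWithinAt) h0 (fun s _ => ?_) t ⟨ht, le_rfl⟩
  nlinarith [sq_nonneg (p s - 5 / 6)]

end Trajectory

/-- **Correctness of the synthesized invariant for mode `q₂` of the nuclear
reactor system:** `D₂'` is a continuous invariant of `(H₂, f)` where
`f(p, x) = (1, x/10 − 6p − 50)`. -/
theorem nuclear_reactor_q2_invariant :
    ∀ p x : ℝ → ℝ,
      (∀ t : ℝ, HasDerivAt p 1 t) →
      (∀ t : ℝ, HasDerivAt x (x t / 10 - 6 * p t - 50) t) →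
      (p 0, x 0) ∈ D2' →
      ∀ T ≥ (0:ℝ), (∀ t ∈ Icc (0:ℝ) T, (p t, x t) ∈ H2) →
        ∀ t ∈ Icc (0:ℝ) T, (p t, x t) ∈ D2' := by
  intro p x hp hx h0 T _ hH t ht
  rw [mem_D2'_iff] at h0 ⊢
  obtain ⟨hp0, hp01, hl0, hu0⟩ := h0
  have hpt := eq_add_mul_of_hasDerivAt_const hp
  have p_le_one : ∀ b ≤ 1 - p 0, ∀ s ∈ Icc 0 b, p s ≤ 1 := fun b hb s hs => by
    linarith [hpt s, hs.2]
  have hT1 : T < 1 - p 0 := by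
    by_contra! hle
    have hs : 1 - p 0 ∈ Icc 0 (1 - p 0) := ⟨by linarith, le_rfl⟩
    refine notMem_H2_of_slack_nonneg ?_ ?_ ?_ (hH (1 - p 0) ⟨hs.1, hle⟩)
    · show p (1 - p 0) = 1
      linarith [hpt (1 - p 0)]
    · exact lowerSlack_nonneg hp hx hl0 (p_le_one _ le_rfl) _ hs
    · exact upperSlack_nonneg hp hx hu0 hs.1
  have hp1 : ∀ s ∈ Icc 0 t, p s ≤ 1 := p_le_one t (by linarith [ht.2])
  have htt : t ∈ Icc 0 t := ⟨ht.1, le_rfl⟩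
  exact ⟨by linarith [hpt t, ht.1], hp1 t htt, lowerSlack_nonneg hp hx hl0 hp1 t htt,
    upperSlack_nonneg hp hx hu0 ht.1⟩
end
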